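/- Let C and D be monoidal categories and let F : C ⥤ D be a lax monoidal functor. Then the following are equivalent: (i) there exist a lax monoidal functor G : D ⥤ C and natural isomorphisms F ⋙ G ≅ 𝟭 C and G ⋙ F ≅ 𝟭 D whose hom components are monoidal natural transformations; (ii) the underlying functor F is an equivalence of categories, and F is strong monoidal (ε_F and all μ_F X Y are isomorphisms). (This is the full one-object instance of the paper's Proposition: a lax functor of bicategories is an equivalence in the 2-category of bicategories, lax functors, and icons if and only if it is bijective on objects, a local equivalence, and a homomorphism.) -/

import Mathlib

/-!
A monoidal unit `η : F ⋙ G ≅ 𝟭 C` makes `μ G (F X) (F Y) ≫ G.map (μ F X Y)` invertible, and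
symmetrically a monoidal counit `ξ : G ⋙ F ≅ 𝟭 D` makes `μ F (G X') (G Y') ≫ F.map (μ G X' Y')`
invertible. The second shows that every `μ G X' Y'` is epi, since `F` is faithful; the first then
exhibits `μ G (F X) (F Y)` as a split mono, hence an isomorphism, so `G.map (μ F X Y)` is invertible
and `G` reflects this. The same argument applies to `ε`. Conversely, the quasi-inverse of a strong
monoidal equivalence is monoidal with monoidal unit and counit.
-/

open CategoryTheory Category MonoidalCategory Functor.LaxMonoidal

namespace CategoryTheory

variable {C : Type*} [Category C] {D : Type*} [Category D]

theorem Functor.epi_of_isIso_comp_map (F : C ⥤ D) [F.ReflectsEpimorphisms] {Z : D} {A B : C}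
    (f : Z ⟶ F.obj A) (g : A ⟶ B) [IsIso (f ≫ F.map g)] : Epi g :=
  F.epi_of_epi_map (epi_of_epi f _)

theorem Functor.isIso_of_epi_of_isIso_comp_map (F : C ⥤ D) [F.ReflectsIsomorphisms] {Z : D}
    {A B : C} (f : Z ⟶ F.obj A) (g : A ⟶ B) [Epi f] [IsIso (f ≫ F.map g)] : IsIso g := by
  have : IsSplitMono f := .mk' ⟨F.map g ≫ CategoryTheory.inv (f ≫ F.map g), by rw [← assoc, IsIso.hom_inv_id]⟩
  have : IsIso f := isIso_of_epi_of_isSplitMono f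
  have : IsIso (F.map g) := IsIso.of_isIso_comp_left f _
  exact isIso_of_reflects_iso g F

variable [MonoidalCategory C] [MonoidalCategory D]

namespace NatTrans.IsMonoidal

variable {F G : C ⥤ D} [F.LaxMonoidal] [G.LaxMonoidal] (τ : F ⟶ G) [IsIso τ] [IsMonoidal τ]
include τ

theorem isIso_ε_of_isIso [IsIso (ε F)] : IsIso (ε G) := by
  rw [← IsMonoidal.unit (τ := τ)]
  infer_instance

theorem isIso_μ_of_isIso (X Y : C) [IsIso (μ F X Y)] : IsIso (μ G X Y) := by
  have : IsIso ((τ.app X ⊗ₘ τ.app Y) ≫ μ G X Y) := by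
    rw [← IsMonoidal.tensor]
    infer_instance
  exact IsIso.of_isIso_comp_left (τ.app X ⊗ₘ τ.app Y) _

end NatTrans.IsMonoidal

section MonoidalInverse

variable {F : C ⥤ D} {G : D ⥤ C} [F.LaxMonoidal] [G.LaxMonoidal]

theorem isIso_ε_comp_map_ε (η : F ⋙ G ≅ 𝟭 C) [NatTrans.IsMonoidal η.hom] :
    IsIso (ε G ≫ G.map (ε F)) := by
  rw [← comp_ε]
  exact NatTrans.IsMonoidal.isIso_ε_of_isIso η.inv

theorem isIso_μ_comp_map_μ (η : F ⋙ G ≅ 𝟭 C) [NatTrans.IsMonoidal η.hom] (X Y : C) :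
    IsIso (μ G (F.obj X) (F.obj Y) ≫ G.map (μ F X Y)) := by
  rw [← comp_μ]
  exact NatTrans.IsMonoidal.isIso_μ_of_isIso η.inv X Y

variable (η : F ⋙ G ≅ 𝟭 C) (ξ : G ⋙ F ≅ 𝟭 D) [NatTrans.IsMonoidal η.hom]
  [NatTrans.IsMonoidal ξ.hom]
include η ξ

theorem isIso_ε_of_monoidal_inverse : IsIso (ε F) := by
  have : F.IsEquivalence := (Equivalence.mk F G η.symm ξ).isEquivalence_functor
  have : G.IsEquivalence := (Equivalence.mk F G η.symm ξ).isEquivalence_inverse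
  have := isIso_ε_comp_map_ε η
  have := isIso_ε_comp_map_ε ξ
  have := F.epi_of_isIso_comp_map (ε F) (ε G)
  exact G.isIso_of_epi_of_isIso_comp_map (ε G) (ε F)

theorem isIso_μ_of_monoidal_inverse (X Y : C) : IsIso (μ F X Y) := by
  have : F.IsEquivalence := (Equivalence.mk F G η.symm ξ).isEquivalence_functor
  have : G.IsEquivalence := (Equivalence.mk F G η.symm ξ).isEquivalence_inverse
  have := isIso_μ_comp_map_μ η X Y
  have := isIso_μ_comp_map_μ ξ (F.obj X) (F.obj Y)
  have := F.epi_of_isIso_comp_map (μ F _ _) (μ G (F.obj X) (F.obj Y))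
  exact G.isIso_of_epi_of_isIso_comp_map (μ G _ _) (μ F X Y)

end MonoidalInverse

theorem Equivalence.exists_monoidal_inverse (e : C ≌ D) [e.functor.Monoidal] :
    ∃ (G : D ⥤ C) (_ : G.LaxMonoidal) (η : e.functor ⋙ G ≅ 𝟭 C) (ξ : G ⋙ e.functor ≅ 𝟭 D),
      NatTrans.IsMonoidal η.hom ∧ NatTrans.IsMonoidal ξ.hom := by
  let _ := e.inverseMonoidal
  have : e.IsMonoidal := ⟨rfl, fun _ _ ↦ rfl⟩
  exact ⟨e.inverse, inferInstance, e.unitIso.symm, e.counitIso,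
    inferInstanceAs (NatTrans.IsMonoidal e.unitIso.inv),
    inferInstanceAs (NatTrans.IsMonoidal e.counit)⟩

end CategoryTheory

/-- Full one-object instance of the Proposition: a lax monoidal functor `F` is an
equivalence in the 2-category of monoidal categories, lax monoidal functors and
monoidal transformations (i.e. admits a lax monoidal quasi-inverse with monoidal
unit and counit isomorphisms) if and only if its underlying functor is an equivalence
of categories and `F` is strong monoidal. -/
theorem monoidal_equivalence_iff_isEquivalence_and_strong
    {C : Type*} [Category C] [MonoidalCategory C]
    {D : Type*} [Category D] [MonoidalCategory D]
    (F : C ⥤ D) [F.LaxMonoidal] :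
    (∃ (G : D ⥤ C) (instG : G.LaxMonoidal) (η : F ⋙ G ≅ 𝟭 C) (ξ : G ⋙ F ≅ 𝟭 D),
        NatTrans.IsMonoidal η.hom ∧ NatTrans.IsMonoidal ξ.hom) ↔
      (F.IsEquivalence ∧ IsIso (ε F) ∧ ∀ X Y : C, IsIso (μ F X Y)) := by
  constructor
  · rintro ⟨G, _, η, ξ, _, _⟩
    exact ⟨(CategoryTheory.Equivalence.mk F G η.symm ξ).isEquivalence_functor,
      isIso_ε_of_monoidal_inverse η ξ, isIso_μ_of_monoidal_inverse η ξ⟩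
  · rintro ⟨_, _, _⟩
    let _ : F.asEquivalence.functor.Monoidal := .ofLaxMonoidal F
    exact F.asEquivalence.exists_monoidal_inverse
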